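/- Let E₁, E₂ be symmetric positive definite k×k matrices, S = E₁⁻¹ + E₂⁻¹, Z = √(E₁⁻¹E₂⁻¹) + (√(E₁⁻¹E₂⁻¹))ᵀ. Then S - Z is positive semidefinite, i.e., S ≽ Z in the Loewner order. -/

import Mathlib

/-!
Write `E₁⁻¹ = P²` with `P` the positive square root and let `Q = (P E₂⁻¹ P)^{1/2}`, so that
`√(E₁⁻¹E₂⁻¹) = P Q P⁻¹` and `E₂⁻¹ = P⁻¹ Q² P⁻¹`. Since `P` and `Q` are symmetric,
`S - Z = (P - P⁻¹ Q)(P - P⁻¹ Q)ᵀ`.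
-/

open Matrix

section OldSqrt

open scoped ComplexOrder

/-- The positive semidefinite square root of a positive semidefinite matrix
(the definition of `Matrix.PosSemidef.sqrt` in the older Mathlib, since removed). -/
noncomputable def Matrix.PosSemidef.sqrt {n 𝕜 : Type*} [Fintype n] [DecidableEq n] [RCLike 𝕜]
    {A : Matrix n n 𝕜} (hA : A.PosSemidef) : Matrix n n 𝕜 :=
  hA.1.eigenvectorUnitary.1 * diagonal ((↑) ∘ (√·) ∘ hA.1.eigenvalues) *
  (star hA.1.eigenvectorUnitary : Matrix n n 𝕜)

end OldSqrt

/-- The principal square root of `E₁ * E₂` for positive definite `E₁, E₂`: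
`E₁^{1/2} · (E₁^{1/2} E₂ E₁^{1/2})^{1/2} · E₁^{-1/2}`. -/
noncomputable def principalSqrtMul {k : ℕ} {E₁ E₂ : Matrix (Fin k) (Fin k) ℝ}
    (h₁ : E₁.PosDef) (h₂ : E₂.PosDef) : Matrix (Fin k) (Fin k) ℝ :=
  h₁.posSemidef.sqrt *
    (h₂.posSemidef.mul_mul_conjTranspose_same h₁.posSemidef.sqrt).sqrt *
    h₁.posSemidef.sqrt⁻¹

namespace Matrix

/-- The square `(P - R Q)(P - R Q)ᴴ`, expanded. -/
lemma posSemidef_mul_self_add_sub_add_conjTranspose {n α : Type*} [Fintype n] [Ring α]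
    [PartialOrder α] [StarRing α] [StarOrderedRing α] {P Q R : Matrix n n α}
    (hP : P.IsHermitian) (hQ : Q.IsHermitian) (hR : R.IsHermitian) :
    (P * P + R * (Q * Q) * R - (P * Q * R + (P * Q * R)ᴴ)).PosSemidef := by
  have hsq : (P - R * Q) * (P - R * Q)ᴴ
      = P * P + R * (Q * Q) * R - (P * Q * R + (P * Q * R)ᴴ) := by
    simp only [conjTranspose_sub, conjTranspose_mul, hP.eq, hQ.eq, hR.eq, Matrix.sub_mul,
      Matrix.mul_sub, Matrix.mul_assoc]
    abel
  exact hsq ▸ posSemidef_self_mul_conjTranspose _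

open scoped ComplexOrder

variable {n 𝕜 : Type*} [Fintype n] [DecidableEq n] [RCLike 𝕜]

namespace PosSemidef

variable {A : Matrix n n 𝕜}

lemma isHermitian_sqrt (hA : A.PosSemidef) : hA.sqrt.IsHermitian := by
  have hdiag : (diagonal ((↑) ∘ (√·) ∘ hA.1.eigenvalues) : Matrix n n 𝕜).IsHermitian :=
    isHermitian_diagonal_of_self_adjoint _ <| funext fun _ => RCLike.conj_ofReal _
  simpa only [sqrt, star_eq_conjTranspose, Matrix.mul_assoc] using
    isHermitian_mul_mul_conjTranspose hA.1.eigenvectorUnitary.1 hdiag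

lemma sqrt_mul_self (hA : A.PosSemidef) : hA.sqrt * hA.sqrt = A := by
  set U : Matrix n n 𝕜 := hA.1.eigenvectorUnitary.1
  have hU : star U * U = 1 := Unitary.star_mul_self_of_mem hA.1.eigenvectorUnitary.2
  have hsq : (diagonal ((↑) ∘ (√·) ∘ hA.1.eigenvalues) : Matrix n n 𝕜) *
      diagonal ((↑) ∘ (√·) ∘ hA.1.eigenvalues) = diagonal ((↑) ∘ hA.1.eigenvalues) := by
    rw [diagonal_mul_diagonal]
    congr 1
    ext i
    simp only [Function.comp_apply, ← RCLike.ofReal_mul, Real.mul_self_sqrt (hA.eigenvalues_nonneg i)]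
  conv_rhs => rw [hA.1.spectral_theorem, Unitary.conjStarAlgAut_apply]
  calc hA.sqrt * hA.sqrt
      = U * (diagonal ((↑) ∘ (√·) ∘ hA.1.eigenvalues) * (star U * U) *
          diagonal ((↑) ∘ (√·) ∘ hA.1.eigenvalues)) * star U := by
        simp only [sqrt, U, Matrix.mul_assoc]
    _ = _ := by rw [hU, Matrix.mul_one, hsq]

end PosSemidef

lemma PosDef.isUnit_det_sqrt {A : Matrix n n 𝕜} (hA : A.PosDef) :
    IsUnit hA.posSemidef.sqrt.det :=
  isUnit_of_mul_isUnit_left (y := hA.posSemidef.sqrt.det) <| by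
    rw [← det_mul, hA.posSemidef.sqrt_mul_self]
    exact hA.isUnit.map detMonoidHom

end Matrix

/-- With `S = E₁⁻¹ + E₂⁻¹` and `Z = √(E₁⁻¹E₂⁻¹) + (√(E₁⁻¹E₂⁻¹))ᵀ`, the matrix
`S - Z` is positive semidefinite, i.e. `S ≽ Z` in the Loewner order. -/
theorem S_sub_Z_posSemidef (k : ℕ) (E₁ E₂ : Matrix (Fin k) (Fin k) ℝ)
    (h₁ : E₁.PosDef) (h₂ : E₂.PosDef) :
    ((E₁⁻¹ + E₂⁻¹)
        - (principalSqrtMul h₁.inv h₂.inv + (principalSqrtMul h₁.inv h₂.inv)ᵀ)).PosSemidef := by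
  set P := h₁.inv.posSemidef.sqrt
  have hP : P.IsHermitian := h₁.inv.posSemidef.isHermitian_sqrt
  have hPdet : IsUnit P.det := h₁.inv.isUnit_det_sqrt
  have hPBP := h₂.inv.posSemidef.mul_mul_conjTranspose_same P
  have hB : P⁻¹ * (hPBP.sqrt * hPBP.sqrt) * P⁻¹ = E₂⁻¹ := by
    simp only [hPBP.sqrt_mul_self, hP.eq, Matrix.mul_assoc, mul_nonsing_inv _ hPdet, Matrix.mul_one,
      nonsing_inv_mul_cancel_left _ _ hPdet]
  have h := posSemidef_mul_self_add_sub_add_conjTranspose hP hPBP.isHermitian_sqrt hP.inv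
  rw [h₁.inv.posSemidef.sqrt_mul_self, hB] at h
  rwa [← conjTranspose_eq_transpose_of_trivial]
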